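/- Let T : H → H be a nonzero compact, bounded, left ℍ-linear, self-adjoint map on H = L²(μ, ℍ). Then there exist λ ∈ ℝ and u ∈ H with u ≠ 0 such that T u = λ • u and |λ| = ‖T‖, where ‖T‖ = sup{‖T v‖ : ‖v‖ ≤ 1}. If moreover T is positive, i.e. ⟪T v, v⟫ ≥ 0 for every v ∈ H, then there exists u ≠ 0 with T u = ‖T‖ • u. -/

import Mathlib

open MeasureTheory

/-- The quaternion-valued inner product on `H = L²(μ, ℍ)`:
`⟪u, v⟫ = ∫ u(x) · conj(v(x)) dμ(x)`. -/
noncomputable def qInnerL2 {X : Type*} [MeasurableSpace X] (μ : Measure X)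
    (u v : Lp (Quaternion ℝ) 2 μ) : Quaternion ℝ :=
  ∫ x, u x * star (v x) ∂μ

/-- A map `T : L²(μ, ℍ) → L²(μ, ℍ)` is left ℍ-linear. -/
def LeftHLinearL2 {X : Type*} [MeasurableSpace X] {μ : Measure X}
    (T : Lp (Quaternion ℝ) 2 μ → Lp (Quaternion ℝ) 2 μ) : Prop :=
  ∀ (p q : Quaternion ℝ) (u v : Lp (Quaternion ℝ) 2 μ),
    T (p • u + q • v) = p • T u + q • T v

/-- A map `T : L²(μ, ℍ) → L²(μ, ℍ)` is bounded. -/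
def BoundedOpL2 {X : Type*} [MeasurableSpace X] {μ : Measure X}
    (T : Lp (Quaternion ℝ) 2 μ → Lp (Quaternion ℝ) 2 μ) : Prop :=
  ∃ c : ℝ, 0 ≤ c ∧ ∀ u, ‖T u‖ ≤ c * ‖u‖


/-- A map `T : L²(μ, ℍ) → L²(μ, ℍ)` is compact: it maps bounded sets to relatively
compact sets. -/
def CompactOpL2 {X : Type*} [MeasurableSpace X] {μ : Measure X}
    (T : Lp (Quaternion ℝ) 2 μ → Lp (Quaternion ℝ) 2 μ) : Prop :=
  ∀ B : Set (Lp (Quaternion ℝ) 2 μ), Bornology.IsBounded B → IsCompact (closure (T '' B))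

/-!
For a self-adjoint operator on a Hilbert space the spectral radius equals the norm, so the
(compact) spectrum contains a point of modulus `‖T‖`; for a compact operator every nonzero
spectral value is an eigenvalue (Fredholm alternative). The real part of the quaternionic inner
product on `L²(μ, ℍ)` is its real Hilbert space inner product, so `T` is a compact symmetric
operator of that real Hilbert space, and positivity makes its eigenvalue nonnegative.
-/

open Module End
open scoped Quaternion RealInnerProductSpace

theorem ContinuousLinearMap.exists_hasEigenvalue_norm_eq_norm {𝕜 E : Type*} [RCLike 𝕜]
    [NormedAddCommGroup E] [InnerProductSpace 𝕜 E] [CompleteSpace E] {T : E →L[𝕜] E}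
    (hT : IsCompactOperator T) (hT' : T.IsSymmetric) (hT0 : T ≠ 0) :
    ∃ μ : 𝕜, HasEigenvalue (T : End 𝕜 E) μ ∧ ‖μ‖ = ‖T‖ := by
  have hρ : spectralRadius 𝕜 T = ‖T‖₊ := T.spectralRadius_eq_nnnorm hT'.isSelfAdjoint
  have hne : (spectrum 𝕜 T).Nonempty := by
    refine Set.nonempty_iff_ne_empty.mpr fun h => hT0 ?_
    rw [← nnnorm_eq_zero, ← ENNReal.coe_eq_zero, ← hρ, spectralRadius, h]
    simp
  obtain ⟨μ, hμ, hμρ⟩ := spectrum.exists_nnnorm_eq_spectralRadius_of_nonempty hne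
  rw [hρ, ENNReal.coe_inj] at hμρ
  have hμ0 : μ ≠ 0 := by
    rintro rfl
    exact hT0 (nnnorm_eq_zero.mp (by simpa using hμρ.symm))
  exact ⟨μ, (hT.hasEigenvalue_iff_mem_spectrum hμ0).mpr hμ, congrArg NNReal.toReal hμρ⟩

theorem ContinuousLinearMap.sSup_norm_apply_of_norm_le_one {𝕜 𝕜₂ E F : Type*}
    [DenselyNormedField 𝕜] [NontriviallyNormedField 𝕜₂] [NormedAddCommGroup E]
    [SeminormedAddCommGroup F] [NormedSpace 𝕜 E] [NormedSpace 𝕜₂ F] {σ : 𝕜 →+* 𝕜₂}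
    [RingHomIsometric σ] (f : E →SL[σ] F) :
    sSup {r : ℝ | ∃ v, ‖v‖ ≤ 1 ∧ r = ‖f v‖} = ‖f‖ := by
  convert f.sSup_unitClosedBall_eq_norm using 2
  ext r
  simp [eq_comm]

section L2

variable {X : Type*} [MeasurableSpace X] {μ : Measure X} {T : Lp ℍ[ℝ] 2 μ → Lp ℍ[ℝ] 2 μ}

theorem re_qInnerL2 (u v : Lp ℍ[ℝ] 2 μ) : (qInnerL2 μ u v).re = ⟪u, v⟫ := by
  have hint : Integrable (fun x => u x * star (v x)) μ :=
    (Lp.memLp u).integrable_mul (Lp.memLp v).star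
  have h := integral_inner (𝕜 := ℝ) hint (1 : ℍ[ℝ])
  simp only [Quaternion.inner_def, one_mul, Quaternion.re_star] at h
  rw [L2.inner_def, qInnerL2, ← h]
  simp only [Quaternion.inner_def]

def LeftHLinearL2.toLinearMap (hT : LeftHLinearL2 T) : Lp ℍ[ℝ] 2 μ →ₗ[ℍ[ℝ]] Lp ℍ[ℝ] 2 μ where
  toFun := T
  map_add' u v := by simpa using hT 1 1 u v
  map_smul' p u := by simpa using hT p 0 u 0

noncomputable def LeftHLinearL2.toContinuousLinearMap (hT : LeftHLinearL2 T)
    (hTb : BoundedOpL2 T) : Lp ℍ[ℝ] 2 μ →L[ℝ] Lp ℍ[ℝ] 2 μ :=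
  (hT.toLinearMap.restrictScalars ℝ).mkContinuousOfExistsBound (hTb.imp fun _ hc => hc.2)

@[simp]
theorem LeftHLinearL2.coe_toContinuousLinearMap (hT : LeftHLinearL2 T) (hTb : BoundedOpL2 T) :
    ⇑(hT.toContinuousLinearMap hTb) = T :=
  rfl

theorem LeftHLinearL2.isSymmetric_toContinuousLinearMap (hT : LeftHLinearL2 T)
    (hTb : BoundedOpL2 T) (hsa : ∀ u v, qInnerL2 μ (T u) v = qInnerL2 μ u (T v)) :
    (hT.toContinuousLinearMap hTb).IsSymmetric := fun u v => by
  simp only [ContinuousLinearMap.coe_coe, coe_toContinuousLinearMap, ← re_qInnerL2, hsa]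

theorem CompactOpL2.isCompactOperator (hTc : CompactOpL2 T) : IsCompactOperator T :=
  (isCompactOperator_iff_exists_mem_nhds_isCompact_closure_image T).mpr
    ⟨_, Metric.ball_mem_nhds 0 one_pos, hTc _ Metric.isBounded_ball⟩

end L2

/-- A nonzero compact bounded left ℍ-linear self-adjoint operator `T` on `L²(μ, ℍ)`
has a real eigenvalue of absolute value `‖T‖`; if moreover `T` is positive, then `‖T‖`
itself is an eigenvalue. -/
theorem exists_eigenvalue_norm_op {X : Type*} [MeasurableSpace X] (μ : Measure X)
    (T : Lp (Quaternion ℝ) 2 μ → Lp (Quaternion ℝ) 2 μ)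
    (hT : LeftHLinearL2 T) (hTb : BoundedOpL2 T) (hTc : CompactOpL2 T)
    (hsa : ∀ u v, qInnerL2 μ (T u) v = qInnerL2 μ u (T v))
    (hT0 : T ≠ 0) :
    (∃ (lam : ℝ) (u : Lp (Quaternion ℝ) 2 μ), u ≠ 0 ∧
        T u = ((lam : Quaternion ℝ)) • u ∧
        |lam| = sSup {r : ℝ | ∃ v : Lp (Quaternion ℝ) 2 μ, ‖v‖ ≤ 1 ∧ r = ‖T v‖}) ∧
    ((∀ v, (qInnerL2 μ (T v) v).im = 0 ∧ 0 ≤ (qInnerL2 μ (T v) v).re) →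
      ∃ u : Lp (Quaternion ℝ) 2 μ, u ≠ 0 ∧
        T u = ((sSup {r : ℝ | ∃ v : Lp (Quaternion ℝ) 2 μ, ‖v‖ ≤ 1 ∧ r = ‖T v‖} :
          ℝ) : Quaternion ℝ) • u) := by
  have hS := hT.coe_toContinuousLinearMap hTb
  have hS0 : hT.toContinuousLinearMap hTb ≠ 0 := fun h => hT0 (by rw [← hS, h]; rfl)
  obtain ⟨lam, hlam, hnorm⟩ := (hT.toContinuousLinearMap hTb).exists_hasEigenvalue_norm_eq_norm
    hTc.isCompactOperator (hT.isSymmetric_toContinuousLinearMap hTb hsa) hS0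
  obtain ⟨u, hu⟩ := hlam.exists_hasEigenvector
  have hTu : T u = (lam : Quaternion ℝ) • u :=
    hu.apply_eq_smul.trans (algebraMap_smul (Quaternion ℝ) lam u).symm
  have hsup : sSup {r : ℝ | ∃ v : Lp (Quaternion ℝ) 2 μ, ‖v‖ ≤ 1 ∧ r = ‖T v‖} = |lam| := by
    rw [← hS, ContinuousLinearMap.sSup_norm_apply_of_norm_le_one, ← hnorm, Real.norm_eq_abs]
  refine ⟨⟨lam, u, hu.2, hTu, hsup.symm⟩, fun hpos => ⟨u, hu.2, ?_⟩⟩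
  have hlam0 : 0 ≤ lam := eigenvalue_nonneg_of_nonneg hlam fun v => by
    simpa [← re_qInnerL2, ← hsa] using (hpos v).2
  rwa [hsup, abs_of_nonneg hlam0]
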